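/- (DQRAT(D^pu) p-simulates IndExt-QU-Res) There is a polynomial p such that for every DQBF Πφ and every IndExt-QU-Res refutation of Πφ of size s, there exists a DQRAT(D^pu) refutation of Πφ of size at most p(s + |Πφ|). -/
import Mathlib


/-! ## Literals, clauses, DQBFs -/

structure Lit (V : Type) where
  var : V
  pos : Bool
deriving DecidableEq

def Lit.negate {V : Type} (l : Lit V) : Lit V := ⟨l.var, !l.pos⟩

abbrev Clause (V : Type) [DecidableEq V] : Type := Finset (Lit V)

/-- An S-form DQBF: universal variables `U`, existential variables `E`,
dependency sets `dep` (only meaningful on `E`), and a CNF matrix. -/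
structure DQBF (V : Type) [DecidableEq V] where
  U : Finset V
  E : Finset V
  dep : V → Finset V
  matrix : Finset (Clause V)

variable {V : Type} [DecidableEq V]

/-- Well-formedness of a DQBF. -/
def DQBF.WF (ψ : DQBF V) : Prop :=
  Disjoint ψ.U ψ.E ∧ (∀ x ∈ ψ.E, ψ.dep x ⊆ ψ.U) ∧
    ∀ C ∈ ψ.matrix, ∀ l ∈ C, l.var ∈ ψ.U ∪ ψ.E

/-- Dependency set with the convention `D_u = {u}` for universal variables. -/
def DQBF.depOf (ψ : DQBF V) (y : V) : Finset V := if y ∈ ψ.U then {y} else ψ.dep y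

/-! ## Semantics -/

def Clause.Sat (β : V → Bool) (C : Clause V) : Prop := ∃ l ∈ C, β l.var = l.pos

/-- A Skolem function set respects the dependency sets if the value of each
existential variable only depends on the assignment to its dependency set. -/
def DQBF.Respects (ψ : DQBF V) (f : V → (V → Bool) → Bool) : Prop :=
  ∀ x ∈ ψ.E, ∀ β γ : V → Bool, (∀ u ∈ ψ.dep x, β u = γ u) → f x β = f x γ

/-- The completed assignment `β ∪ f(β)`. -/
def DQBF.Completed (ψ : DQBF V) (f : V → (V → Bool) → Bool) (β : V → Bool) : V → Bool :=
  fun v => if v ∈ ψ.E then f v β else β v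

def DQBF.IsModel (ψ : DQBF V) (f : V → (V → Bool) → Bool) : Prop :=
  ψ.Respects f ∧ ∀ β : V → Bool, ∀ C ∈ ψ.matrix, Clause.Sat (ψ.Completed f β) C

def DQBF.IsTrue (ψ : DQBF V) : Prop := ∃ f, ψ.IsModel f

/-- Flip the value of variable `u` in an assignment. -/
def flipAt (u : V) (α : V → Bool) : V → Bool := fun w => if w = u then !(α w) else α w

/-- `(α, x, u)` is a dependency witness for the Skolem function set `f`. -/
def DepWitness (ψ : DQBF V) (f : V → (V → Bool) → Bool) (α : V → Bool) (x u : V) : Prop :=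
  f x α ≠ f x (flipAt u α)

/-! ## Resolution paths and dependency schemes -/

/-- The clauses of the matrix containing the literal `w`. -/
def DQBF.litClauses (ψ : DQBF V) (w : Lit V) : Finset (Clause V) :=
  ψ.matrix.filter fun C => w ∈ C

/-- `S_u`: the existential variables depending on `u`. -/
def DQBF.Sset (ψ : DQBF V) (u : V) : Finset V := ψ.E.filter fun x => u ∈ ψ.dep x

/-- `pathl^pu(w, ψ, χ, S)`: the least set of literals on `S`-variables reachable by a
`w`-pure resolution path starting from the clauses of `χ`. -/
inductive PathLPU (ψ : DQBF V) (w : Lit V) (χ : Finset (Clause V)) (S : Finset V) :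
    Lit V → Prop
  | base {C : Clause V} {l : Lit V} : C ∈ χ → l ∈ C → l.var ∈ S → PathLPU ψ w χ S l
  | step {p l : Lit V} {Ecl : Clause V} :
      PathLPU ψ w χ S p → Ecl ∈ ψ.matrix → p.negate ∈ Ecl → w.negate ∉ Ecl →
      l ∈ Ecl → l ≠ p.negate → l.var ∈ S → PathLPU ψ w χ S l

/-- `pathc^pu(w, ψ, χ, S)`: the corresponding set of reachable clauses. -/
inductive PathCPU (ψ : DQBF V) (w : Lit V) (χ : Finset (Clause V)) (S : Finset V) :
    Clause V → Prop
  | base {C : Clause V} : C ∈ χ → PathCPU ψ w χ S C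
  | step {p : Lit V} {Ecl : Clause V} :
      PathLPU ψ w χ S p → Ecl ∈ ψ.matrix → p.negate ∈ Ecl → w.negate ∉ Ecl →
      PathCPU ψ w χ S Ecl

/-- `pathl^rrs(ψ, χ, S)`: the analogous closure without the purity requirement. -/
inductive PathLRRS (ψ : DQBF V) (χ : Finset (Clause V)) (S : Finset V) : Lit V → Prop
  | base {C : Clause V} {l : Lit V} : C ∈ χ → l ∈ C → l.var ∈ S → PathLRRS ψ χ S l
  | step {p l : Lit V} {Ecl : Clause V} :
      PathLRRS ψ χ S p → Ecl ∈ ψ.matrix → p.negate ∈ Ecl →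
      l ∈ Ecl → l ≠ p.negate → l.var ∈ S → PathLRRS ψ χ S l

/-- `w ⤳ l` (pure path connection). -/
def ConnPU (ψ : DQBF V) (w l : Lit V) : Prop :=
  PathLPU ψ w (ψ.litClauses w) (ψ.Sset w.var) l

/-- `w ⤳ʳ l` (reflexive resolution path connection). -/
def ConnRRS (ψ : DQBF V) (w l : Lit V) : Prop :=
  PathLRRS ψ (ψ.litClauses w) (ψ.Sset w.var) l

/-- The pure universal dependency scheme `D^pu`. -/
def Dpu (ψ : DQBF V) (u x : V) : Prop :=
  u ∈ ψ.dep x ∧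
    ((ConnPU ψ ⟨u, true⟩ ⟨x, true⟩ ∧ ConnPU ψ ⟨u, false⟩ ⟨x, false⟩) ∨
      (ConnPU ψ ⟨u, false⟩ ⟨x, true⟩ ∧ ConnPU ψ ⟨u, true⟩ ⟨x, false⟩))

/-- The reflexive resolution path dependency scheme `D^rrs`. -/
def Drrs (ψ : DQBF V) (u x : V) : Prop :=
  u ∈ ψ.dep x ∧
    ((ConnRRS ψ ⟨u, true⟩ ⟨x, true⟩ ∧ ConnRRS ψ ⟨u, false⟩ ⟨x, false⟩) ∨
      (ConnRRS ψ ⟨u, false⟩ ⟨x, true⟩ ∧ ConnRRS ψ ⟨u, true⟩ ⟨x, false⟩))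

/-- The trivial dependency scheme `D^trv`. -/
def Dtrv (ψ : DQBF V) (u x : V) : Prop := u ∈ ψ.dep x

/-! ## LDQ(D)-Res -/

/-- Derivability of a clause in LDQ(D)-Res from the matrix of `ψ`, for a
dependency relation `D`. -/
inductive LDQDeriv (ψ : DQBF V) (D : V → V → Prop) : Clause V → Prop
  | ax {C : Clause V} : C ∈ ψ.matrix → LDQDeriv ψ D C
  | red {C : Clause V} {w : Lit V} :
      LDQDeriv ψ D (insert w C) → w.var ∈ ψ.U → w ∉ C →
      (∀ l ∈ C, l.var ∈ ψ.E → ¬ D w.var l.var) → LDQDeriv ψ D C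
  | res {Ec Fc : Clause V} {x : V} :
      x ∈ ψ.E →
      LDQDeriv ψ D (insert ⟨x, false⟩ Ec) → LDQDeriv ψ D (insert ⟨x, true⟩ Fc) →
      (⟨x, false⟩ : Lit V) ∉ Ec → (⟨x, true⟩ : Lit V) ∉ Fc →
      (∀ v ∈ Ec, v.var ∈ ψ.U → v.negate ∈ Fc → ¬ D v.var x) →
      LDQDeriv ψ D (Ec ∪ Fc)

/-- A single valid LDQ(D)-Res step, given the list of previously derived clauses. -/
def LDQStep (ψ : DQBF V) (D : V → V → Prop) (prev : List (Clause V)) (C : Clause V) : Prop :=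
  C ∈ ψ.matrix ∨
    (∃ w : Lit V, w.var ∈ ψ.U ∧ w ∉ C ∧ insert w C ∈ prev ∧
      ∀ l ∈ C, l.var ∈ ψ.E → ¬ D w.var l.var) ∨
    (∃ (x : V) (Ec Fc : Clause V), x ∈ ψ.E ∧ C = Ec ∪ Fc ∧
      (⟨x, false⟩ : Lit V) ∉ Ec ∧ (⟨x, true⟩ : Lit V) ∉ Fc ∧
      insert (⟨x, false⟩ : Lit V) Ec ∈ prev ∧ insert (⟨x, true⟩ : Lit V) Fc ∈ prev ∧
      ∀ v ∈ Ec, v.var ∈ ψ.U → v.negate ∈ Fc → ¬ D v.var x)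

/-- An LDQ(D)-Res proof: a list of clauses, each a valid step from the earlier ones. -/
def IsLDQProof (ψ : DQBF V) (D : V → V → Prop) (π : List (Clause V)) : Prop :=
  ∀ i : Fin π.length, LDQStep ψ D (π.take i.val) (π.get i)

def IsLDQRefutation (ψ : DQBF V) (D : V → V → Prop) (π : List (Clause V)) : Prop :=
  IsLDQProof ψ D π ∧ (∅ : Clause V) ∈ π

/-- A single valid Q-Res step. -/
def QResStep (ψ : DQBF V) (prev : List (Clause V)) (C : Clause V) : Prop :=
  C ∈ ψ.matrix ∨
    (∃ w : Lit V, w.var ∈ ψ.U ∧ w ∉ C ∧ w.negate ∉ C ∧ insert w C ∈ prev ∧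
      ∀ l ∈ C, l.var ∈ ψ.E → w.var ∉ ψ.dep l.var) ∨
    (∃ (x : V) (Ec Fc : Clause V), x ∈ ψ.E ∧ C = Ec ∪ Fc ∧
      (⟨x, false⟩ : Lit V) ∉ Ec ∧ (⟨x, true⟩ : Lit V) ∉ Fc ∧
      insert (⟨x, false⟩ : Lit V) Ec ∈ prev ∧ insert (⟨x, true⟩ : Lit V) Fc ∈ prev ∧
      ∀ v ∈ Ec, v.var ∈ ψ.U → v.negate ∉ Fc)

def IsQResProof (ψ : DQBF V) (π : List (Clause V)) : Prop :=
  ∀ i : Fin π.length, QResStep ψ (π.take i.val) (π.get i)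

def IsQResRefutation (ψ : DQBF V) (π : List (Clause V)) : Prop :=
  IsQResProof ψ π ∧ (∅ : Clause V) ∈ π

/-! ## QBFs: DQBFs with a linear quantifier prefix -/

structure QBF (V : Type) [DecidableEq V] extends DQBF V where
  ord : V → ℕ

/-- Well-formedness of a QBF: dependency sets are induced by the prefix order. -/
def QBF.WF (ψ : QBF V) : Prop :=
  ψ.toDQBF.WF ∧
    (∀ a ∈ ψ.U ∪ ψ.E, ∀ b ∈ ψ.U ∪ ψ.E, ψ.ord a = ψ.ord b → a = b) ∧
    ∀ x ∈ ψ.E, ∀ u, u ∈ ψ.dep x ↔ u ∈ ψ.U ∧ ψ.ord u < ψ.ord x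

/-! ## IndExt-QU-Res -/

/-- The clause `¬α` of negations of the literals of a partial assignment `α`. -/
def negAssign (α : Finset (Lit V)) : Clause V := α.image Lit.negate

/-- Size of a DQBF. -/
def DQBF.size (ψ : DQBF V) : ℕ := ψ.U.card + ψ.E.card + ∑ C ∈ ψ.matrix, (C.card + 1)

/-- IndExt-QU-Res derivations: from the DQBF `ψ0`, reach a (possibly extended)
prefix together with a set of derived clauses, in the given number of steps. -/
inductive IndExtDeriv (ψ0 : DQBF V) : DQBF V → Finset (Clause V) → ℕ → Prop
  | start : IndExtDeriv ψ0 ψ0 ψ0.matrix 0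
  | res {ψ : DQBF V} {Γ : Finset (Clause V)} {n : ℕ} {Ec Fc : Clause V} {x : V} :
      IndExtDeriv ψ0 ψ Γ n → x ∈ ψ.E →
      (⟨x, false⟩ : Lit V) ∉ Ec → (⟨x, true⟩ : Lit V) ∉ Fc →
      insert (⟨x, false⟩ : Lit V) Ec ∈ Γ → insert (⟨x, true⟩ : Lit V) Fc ∈ Γ →
      IndExtDeriv ψ0 ψ (insert (Ec ∪ Fc) Γ) (n + 1)
  | red {ψ : DQBF V} {Γ : Finset (Clause V)} {n : ℕ} {C : Clause V} {w : Lit V} :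
      IndExtDeriv ψ0 ψ Γ n → insert w C ∈ Γ → w.var ∈ ψ.U → w ∉ C → w.negate ∉ C →
      (∀ l ∈ C, l.var ∈ ψ.E → w.var ∉ ψ.dep l.var) →
      IndExtDeriv ψ0 ψ (insert C Γ) (n + 1)
  | ext {ψ : DQBF V} {Γ : Finset (Clause V)} {n : ℕ} (α : Finset (Lit V)) (y1 y2 v : V) :
      IndExtDeriv ψ0 ψ Γ n →
      (∀ a ∈ α, a.var ∈ ψ.U) → v ∉ ψ.U ∪ ψ.E → y1 ∈ ψ.U ∪ ψ.E → y2 ∈ ψ.U ∪ ψ.E →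
      IndExtDeriv ψ0
        ⟨ψ.U, insert v ψ.E,
          Function.update ψ.dep v ((ψ.depOf y1 ∪ ψ.depOf y2) \ α.image Lit.var), ψ.matrix⟩
        (insert (negAssign α ∪ ({⟨v, true⟩, ⟨y1, true⟩} : Clause V))
          (insert (negAssign α ∪ ({⟨v, true⟩, ⟨y2, true⟩} : Clause V))
            (insert (negAssign α ∪ ({⟨v, false⟩, ⟨y1, false⟩, ⟨y2, false⟩} : Clause V)) Γ)))
        (n + 1)
  | weakU {ψ : DQBF V} {Γ : Finset (Clause V)} {n : ℕ} (v : V) :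
      IndExtDeriv ψ0 ψ Γ n → v ∉ ψ.U ∪ ψ.E →
      IndExtDeriv ψ0 ⟨insert v ψ.U, ψ.E, ψ.dep, ψ.matrix⟩ Γ (n + 1)
  | weakE {ψ : DQBF V} {Γ : Finset (Clause V)} {n : ℕ} (v : V) (Dv : Finset V) :
      IndExtDeriv ψ0 ψ Γ n → v ∉ ψ.U ∪ ψ.E → Dv ⊆ ψ.U →
      IndExtDeriv ψ0 ⟨ψ.U, insert v ψ.E, Function.update ψ.dep v Dv, ψ.matrix⟩ Γ (n + 1)

/-- Substituting variables in a clause. -/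
def Clause.subst (σ : V → V) (C : Clause V) : Clause V :=
  C.image fun l => (⟨σ l.var, l.pos⟩ : Lit V)

/-! ## Unit propagation, outer variables, and DQRAT(D^pu) -/

/-- Literals derivable by unit propagation from a (possibly infinite) clause set. -/
inductive UPLit (Φ : Set (Clause V)) : Lit V → Prop
  | unit {C : Clause V} {l : Lit V} : C ∈ Φ → l ∈ C →
      (∀ l' ∈ C, l' ≠ l → UPLit Φ l'.negate) → UPLit Φ l

/-- `Φ ⊢₁ ⊥`: unit propagation derives a conflict. -/
def UPBot (Φ : Set (Clause V)) : Prop := ∃ C ∈ Φ, ∀ l ∈ C, UPLit Φ l.negate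

/-- The unit clauses negating the literals of `C`. -/
def negUnits (C : Clause V) : Set (Clause V) := {D | ∃ l ∈ C, D = ({l.negate} : Clause V)}

def DQBF.Inner (ψ : DQBF V) (u : V) : Set V := {y | y ∈ ψ.E ∧ u ∈ ψ.dep y}

/-- The set of outer variables of a variable. -/
def DQBF.Outer (ψ : DQBF V) (x : V) : Set V :=
  if x ∈ ψ.U then
    {x} ∪ ((↑(ψ.U ∪ ψ.E) : Set V) ∩ ⋂ z ∈ ψ.Inner x, {y | ψ.depOf y ⊆ ψ.dep z \ {x}})
  else {y | y ∈ ψ.U ∪ ψ.E ∧ ψ.depOf y ⊆ ψ.dep x}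

/-- `y ≲_Π x`. -/
def outerLe (ψ : DQBF V) (y x : V) : Prop := y ∈ ψ.Outer x

/-- `D_C`, the union of the dependency sets of the variables of a clause. -/
def depClause (ψ : DQBF V) (C : Clause V) : Finset V := C.biUnion fun l => ψ.depOf l.var

/-- The unit clauses used in the DQRAT side condition: outer literals of `D` negated. -/
def ratUnits (ψ : DQBF V) (D : Clause V) (l : Lit V) : Set (Clause V) :=
  {Dc | ∃ x ∈ D, x ≠ l.negate ∧ outerLe ψ x.var l.var ∧ Dc = ({x.negate} : Clause V)}

/-- DQRAT(D^pu) derivations: sequences of DQBFs, each obtained from the previous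
one by one of the rules ATA, Del, UR, DQRAT∃, DQRAT∀, BPM, D^pu. -/
inductive DQRATDeriv (ψ0 : DQBF V) : DQBF V → ℕ → Prop
  | start : DQRATDeriv ψ0 ψ0 0
  | ata {ψ : DQBF V} {n : ℕ} (C : Clause V) :
      DQRATDeriv ψ0 ψ n → UPBot ((↑ψ.matrix : Set (Clause V)) ∪ negUnits C) →
      DQRATDeriv ψ0 ⟨ψ.U, ψ.E, ψ.dep, insert C ψ.matrix⟩ (n + 1)
  | del {ψ : DQBF V} {n : ℕ} (C : Clause V) :
      DQRATDeriv ψ0 ψ n → C ∈ ψ.matrix →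
      DQRATDeriv ψ0 ⟨ψ.U, ψ.E, ψ.dep, ψ.matrix.erase C⟩ (n + 1)
  | ur {ψ : DQBF V} {n : ℕ} (C : Clause V) (l : Lit V) :
      DQRATDeriv ψ0 ψ n → insert l C ∈ ψ.matrix → l ∉ C → l.var ∈ ψ.U →
      l.var ∉ depClause ψ C →
      DQRATDeriv ψ0 ⟨ψ.U, ψ.E, ψ.dep, insert C (ψ.matrix.erase (insert l C))⟩ (n + 1)
  | ratE {ψ : DQBF V} {n : ℕ} (C : Clause V) (l : Lit V) :
      DQRATDeriv ψ0 ψ n → l.var ∈ ψ.E → l ∉ C →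
      (∀ D ∈ ψ.matrix, l.negate ∈ D →
        UPBot ((↑ψ.matrix : Set (Clause V)) ∪ negUnits (insert l C) ∪ ratUnits ψ D l)) →
      DQRATDeriv ψ0 ⟨ψ.U, ψ.E, ψ.dep, insert (insert l C) ψ.matrix⟩ (n + 1)
  | ratA {ψ : DQBF V} {n : ℕ} (C : Clause V) (l : Lit V) :
      DQRATDeriv ψ0 ψ n → l.var ∈ ψ.U → l ∉ C → insert l C ∈ ψ.matrix →
      (∀ D ∈ ψ.matrix, l.negate ∈ D →
        UPBot ((↑ψ.matrix : Set (Clause V)) ∪ negUnits C ∪ {({l} : Clause V)} ∪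
          ratUnits ψ D l)) →
      DQRATDeriv ψ0 ⟨ψ.U, ψ.E, ψ.dep, insert C (ψ.matrix.erase (insert l C))⟩ (n + 1)
  | bpm {ψ : DQBF V} {n : ℕ} (ψ' : DQBF V) :
      DQRATDeriv ψ0 ψ n → ψ.U ⊆ ψ'.U → ψ.E ⊆ ψ'.E → Disjoint ψ'.U ψ'.E →
      (∀ x ∈ ψ.E, ψ'.dep x = ψ.dep x) → (∀ x ∈ ψ'.E, ψ'.dep x ⊆ ψ'.U) →
      ψ'.matrix = ψ.matrix →
      DQRATDeriv ψ0 ψ' (n + 1)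
  | dpuStep {ψ : DQBF V} {n : ℕ} (ψ' : DQBF V) :
      DQRATDeriv ψ0 ψ n → ψ'.U = ψ.U → ψ'.E = ψ.E → ψ'.matrix = ψ.matrix →
      (∀ u x, x ∈ ψ.E → u ∉ ψ'.dep x → (u ∉ ψ.dep x ∨ ¬ Dpu ψ u x)) →
      DQRATDeriv ψ0 ψ' (n + 1)

/-- A DQRAT(D^pu) refutation of `ψ0` with `n` steps. -/
def DQRATRefutable (ψ0 : DQBF V) (n : ℕ) : Prop :=
  ∃ ψ : DQBF V, DQRATDeriv ψ0 ψ n ∧ (∅ : Clause V) ∈ ψ.matrix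

/-! ## The ts-LQParity formulas -/

inductive PVar : Type where
  | x : ℕ → PVar
  | z : PVar
  | t : ℕ → PVar
  | s : ℕ → PVar
  | b : PVar
deriving DecidableEq

def L (v : PVar) (b : Bool) : Lit PVar := ⟨v, b⟩

/-- The four clauses of `xor_l(o1, o2, o, zl)`. -/
def xorl (o1 o2 o : PVar) (zl : Lit PVar) : Finset (Clause PVar) :=
  { {zl, L o1 false, L o2 false, L o false},
    {zl, L o1 true,  L o2 true,  L o false},
    {zl, L o1 false, L o2 true,  L o true},
    {zl, L o1 true,  L o2 false, L o true} }

def tsMatrix (N : ℕ) : Finset (Clause PVar) :=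
  xorl (.x 1) (.x 2) (.t 2) (L .z true) ∪
    (Finset.Icc 3 N).biUnion (fun i => xorl (.t (i - 1)) (.x i) (.t i) (L .z true)) ∪
    xorl (.x 1) (.x 2) (.s 2) (L .z false) ∪
    (Finset.Icc 3 N).biUnion (fun i => xorl (.s (i - 1)) (.x i) (.s i) (L .z false)) ∪
    {{L .z true, L (.t N) true}, {L .z false, L (.s N) false}}

def tsDep : PVar → Finset PVar
  | .t _ => {.z}
  | .s _ => {.z}
  | .b => {.z}
  | _ => ∅

/-- The QBF ts-LQParity(N), presented as a DQBF. -/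
def tsLQParity (N : ℕ) : DQBF PVar where
  U := {.z}
  E := (Finset.Icc 1 N).image PVar.x ∪ (Finset.Icc 2 N).image PVar.t ∪
    (Finset.Icc 2 N).image PVar.s
  dep := tsDep
  matrix := tsMatrix N

def bridgedMatrix (N : ℕ) : Finset (Clause PVar) :=
  tsMatrix N ∪
    { {L .z true, L (.t N) false, L .b true}, {L .z true, L (.t N) true, L .b false},
      {L .z false, L (.s N) false, L .b true}, {L .z false, L (.s N) true, L .b false} }

/-- The QBF Bridged ts-LQParity(N), presented as a DQBF. -/
def bridged (N : ℕ) : DQBF PVar where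
  U := {.z}
  E := (Finset.Icc 1 N).image PVar.x ∪ (Finset.Icc 2 N).image PVar.t ∪
    (Finset.Icc 2 N).image PVar.s ∪ {.b}
  dep := tsDep
  matrix := bridgedMatrix N

/-! ## The NP-hardness gadget -/

inductive GVar (W : Type) : Type where
  | v : W → GVar W
  | u : GVar W
  | x : GVar W
deriving DecidableEq

/-- The gadget DQBF `∀(V ∪ {u}) ∃x(V ∪ {u}). (⋁_{v ∈ V} v) ∨ u ∨ ¬x`. -/
def gadget {W : Type} [DecidableEq W] (Vs : Finset W) : DQBF (GVar W) where
  U := Vs.image GVar.v ∪ {GVar.u}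
  E := {GVar.x}
  dep := fun y => if y = GVar.x then Vs.image GVar.v ∪ {GVar.u} else ∅
  matrix := {Vs.image (fun w => (⟨GVar.v w, true⟩ : Lit (GVar W))) ∪
    ({⟨GVar.u, true⟩, ⟨GVar.x, false⟩} : Clause (GVar W))}

/-- The Skolem function `f_x = φ(V) ∧ u`. -/
def gadgetSkolem {W : Type} [DecidableEq W] (φ : Finset (Clause W)) :
    GVar W → (GVar W → Bool) → Bool := fun y β =>
  if y = GVar.x then
    (decide (∀ C ∈ φ, ∃ l ∈ C, β (GVar.v l.var) = l.pos)) && β GVar.u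
  else false

/-! ## Auxiliary lemmas for the simulation -/

section Simulation

@[simp] lemma Lit.negate_negate (l : Lit V) : l.negate.negate = l := by
  cases l; simp [Lit.negate]

@[simp] lemma Lit.negate_var' (l : Lit V) : l.negate.var = l.var := rfl

lemma lit_eq_of_var {l w : Lit V} (h : l.var = w.var) : l = w ∨ l = w.negate := by
  cases l with
  | mk lv lp =>
    cases w with
    | mk wv wp =>
      simp only [Lit.var] at h
      subst h
      cases lp <;> cases wp <;> simp [Lit.negate]

lemma uplit_single {Φ : Set (Clause V)} {l : Lit V} (h : ({l} : Clause V) ∈ Φ) :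
    UPLit Φ l := by
  refine UPLit.unit h (Finset.mem_singleton_self l) ?_
  intro l' h1 h2
  exact absurd (Finset.mem_singleton.mp h1) h2

lemma upbot_contra {Φ : Set (Clause V)} {b : Lit V}
    (h1 : ({b} : Clause V) ∈ Φ) (h2 : ({b.negate} : Clause V) ∈ Φ) : UPBot Φ := by
  refine ⟨{b}, h1, ?_⟩
  intro l hl
  rw [Finset.mem_singleton] at hl; subst hl
  exact uplit_single h2

lemma mem_negUnits {C : Clause V} {l : Lit V} (h : l ∈ C) :
    ({l.negate} : Clause V) ∈ negUnits C := ⟨l, h, rfl⟩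

lemma upbot_weaken {Φ : Set (Clause V)} {C : Clause V} (hC : C ∈ Φ)
    (hsub : ∀ l ∈ C, ({l.negate} : Clause V) ∈ Φ) : UPBot Φ :=
  ⟨C, hC, fun l hl => uplit_single (hsub l hl)⟩

lemma upbot_taut {Φ : Set (Clause V)} {T : Clause V} {b : Lit V}
    (hb : b ∈ T) (hbn : b.negate ∈ T) (hsub : negUnits T ⊆ Φ) : UPBot Φ := by
  refine upbot_contra (b := b) ?_ (hsub (mem_negUnits hb))
  have := hsub (mem_negUnits hbn)
  simpa using this

lemma upbot_res {M : Finset (Clause V)} {Ec Fc : Clause V} {x : V}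
    (hE : insert (⟨x, false⟩ : Lit V) Ec ∈ M)
    (hF : insert (⟨x, true⟩ : Lit V) Fc ∈ M)
    (hFx : (⟨x, true⟩ : Lit V) ∉ Fc) :
    UPBot ((↑M : Set (Clause V)) ∪ negUnits (Ec ∪ Fc)) := by
  set Φ := (↑M : Set (Clause V)) ∪ negUnits (Ec ∪ Fc) with hΦ
  have hu : ∀ l ∈ Ec ∪ Fc, UPLit Φ l.negate := fun l hl =>
    uplit_single (Or.inr (mem_negUnits hl))
  refine ⟨insert (⟨x, true⟩ : Lit V) Fc, Or.inl hF, ?_⟩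
  intro l hl
  rcases Finset.mem_insert.mp hl with rfl | hlF
  · show UPLit Φ (⟨x, false⟩ : Lit V)
    refine UPLit.unit (Or.inl hE) (Finset.mem_insert_self _ _) ?_
    intro l' hl' hne
    have hl'E : l' ∈ Ec := by
      rcases Finset.mem_insert.mp hl' with rfl | h
      · exact absurd rfl hne
      · exact h
    exact hu l' (Finset.mem_union_left _ hl'E)
  · exact hu l (Finset.mem_union_right _ hlF)

lemma deriv_del_list {ψ0 : DQBF V} (L : List (Clause V)) :
    ∀ {U E : Finset V} {d : V → Finset V} {M : Finset (Clause V)} {n : ℕ},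
      DQRATDeriv ψ0 ⟨U, E, d, M⟩ n → L.Nodup → (∀ C ∈ L, C ∈ M) →
      DQRATDeriv ψ0 ⟨U, E, d, M \ L.toFinset⟩ (n + L.length) := by
  induction L with
  | nil => intro U E d M n h _ _; simpa using h
  | cons a L ih =>
    intro U E d M n h hnd hmem
    have h1 : DQRATDeriv ψ0 ⟨U, E, d, M.erase a⟩ (n + 1) :=
      DQRATDeriv.del a h (hmem a (by simp))
    have hnd' := List.nodup_cons.mp hnd
    have h2 := ih h1 hnd'.2 (fun C hC =>
      Finset.mem_erase.mpr ⟨fun hCa => hnd'.1 (hCa ▸ hC), hmem C (by simp [hC])⟩)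
    have hMeq : M.erase a \ L.toFinset = M \ (a :: L).toFinset := by
      ext C
      simp only [Finset.mem_sdiff, Finset.mem_erase, List.toFinset_cons,
        Finset.mem_insert, List.mem_toFinset]
      tauto
    have hn : n + 1 + L.length = n + (a :: L).length := by
      simp [List.length_cons]; omega
    rw [hMeq] at h2; rwa [hn] at h2

lemma deriv_add_taut_list {ψ0 : DQBF V} (L : List (Clause V)) :
    ∀ {U E : Finset V} {d : V → Finset V} {M : Finset (Clause V)} {n : ℕ},
      DQRATDeriv ψ0 ⟨U, E, d, M⟩ n →
      (∀ C ∈ L, (∃ l ∈ C, l.var ∈ E) ∧ ∃ b ∈ C, b.negate ∈ C) →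
      DQRATDeriv ψ0 ⟨U, E, d, M ∪ L.toFinset⟩ (n + L.length) := by
  induction L with
  | nil => intro U E d M n h _; simpa using h
  | cons a L ih =>
    intro U E d M n h hyp
    obtain ⟨⟨l, hlC, hlE⟩, b, hb, hbn⟩ := hyp a (by simp)
    have hIns : insert l (a.erase l) = a := Finset.insert_erase hlC
    have h1 : DQRATDeriv ψ0 ⟨U, E, d, insert (insert l (a.erase l)) M⟩ (n + 1) := by
      refine DQRATDeriv.ratE (a.erase l) l h hlE (Finset.notMem_erase _ _) ?_
      intro D _ _
      refine upbot_taut (T := insert l (a.erase l)) (b := b) ?_ ?_ ?_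
      · rw [hIns]; exact hb
      · rw [hIns]; exact hbn
      · intro X hX; exact Or.inl (Or.inr hX)
    rw [hIns] at h1
    have h2 := ih h1 (fun C hC => hyp C (by simp [hC]))
    have hMeq : insert a M ∪ L.toFinset = M ∪ (a :: L).toFinset := by
      ext C
      simp only [Finset.mem_union, Finset.mem_insert, List.toFinset_cons,
        List.mem_toFinset]
      tauto
    rw [hMeq] at h2
    have hn : n + 1 + L.length = n + (a :: L).length := by
      simp [List.length_cons]; omega
    rwa [hn] at h2

lemma pathlpu_not_var {ψ : DQBF V} {a : Lit V} {S : Finset V} {v : V}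
    (hM : ∀ C ∈ ψ.matrix, (∃ l ∈ C, l.var = v) → a ∉ C ∧ a.negate ∈ C) :
    ∀ l, PathLPU ψ a (ψ.litClauses a) S l → l.var ≠ v := by
  intro l h
  induction h with
  | base hC hl _ =>
    intro hv
    obtain ⟨hCm, haC⟩ := Finset.mem_filter.mp hC
    exact (hM _ hCm ⟨_, hl, hv⟩).1 haC
  | step hp hEm hneg hw hl hne _ =>
    intro hv
    exact hw (hM _ hEm ⟨_, hl, hv⟩).2

lemma not_dpu {ψ : DQBF V} {u v : V} {a : Lit V} (ha : a.var = u)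
    (hM : ∀ C ∈ ψ.matrix, (∃ l ∈ C, l.var = v) → a ∉ C ∧ a.negate ∈ C) :
    ¬ Dpu ψ u v := by
  have key : ∀ b : Bool, ¬ ConnPU ψ a ⟨v, b⟩ := by
    intro b hconn
    exact pathlpu_not_var hM _ hconn rfl
  rintro ⟨-, h | h⟩ <;> obtain ⟨h1, h2⟩ := h <;>
    · cases a with
      | mk av ap =>
        simp only [Lit.var] at ha
        subst ha
        cases ap
        · first
            | exact key _ h1
            | exact key _ h2
        · first
            | exact key _ h1
            | exact key _ h2

lemma outerLe_intro {ψc : DQBF V} {y x : V} (hx : x ∉ ψc.U)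
    (hy : y ∈ ψc.U ∪ ψc.E) (hd : ψc.depOf y ⊆ ψc.dep x) : outerLe ψc y x := by
  show y ∈ ψc.Outer x
  unfold DQBF.Outer
  rw [if_neg hx]
  exact ⟨hy, hd⟩

theorem sim_main {ψ0 : DQBF V} (hWF : ψ0.WF) {ψ : DQBF V} {Γ : Finset (Clause V)}
    {n : ℕ} (h : IndExtDeriv ψ0 ψ Γ n) :
    Disjoint ψ.U ψ.E ∧ (∀ x ∈ ψ.E, ψ.dep x ⊆ ψ.U) ∧
    (∀ C ∈ Γ, ∀ l ∈ C, l.var ∈ ψ.U ∪ ψ.E) ∧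
    ∃ (ψ' : DQBF V) (m : ℕ), DQRATDeriv ψ0 ψ' m ∧ m ≤ 11 * n ∧
      ψ'.U = ψ.U ∧ ψ'.E = ψ.E ∧ (∀ x ∈ ψ.E, ψ'.dep x = ψ.dep x) ∧
      Γ ⊆ ψ'.matrix ∧ ∀ C ∈ ψ'.matrix, ∀ l ∈ C, l.var ∈ ψ.U ∪ ψ.E := by
  induction h with
  | start =>
    exact ⟨hWF.1, hWF.2.1, hWF.2.2, ψ0, 0, DQRATDeriv.start, by omega, rfl, rfl,
      fun _ _ => rfl, Finset.Subset.refl _, hWF.2.2⟩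
  | @res ψ Γ n Ec Fc x hd hx hEc hFc hmE hmF ih =>
    obtain ⟨hdisj, hdep, hΓv, ψ', m, hder, hm, hU, hE', hdepeq, hsub, hmv⟩ := ih
    have hvars : ∀ l ∈ Ec ∪ Fc, l.var ∈ ψ.U ∪ ψ.E := by
      intro l hl
      rcases Finset.mem_union.mp hl with hE | hF
      · exact hΓv _ hmE _ (Finset.mem_insert_of_mem hE)
      · exact hΓv _ hmF _ (Finset.mem_insert_of_mem hF)
    refine ⟨hdisj, hdep, ?_, ⟨ψ'.U, ψ'.E, ψ'.dep, insert (Ec ∪ Fc) ψ'.matrix⟩,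
      m + 1, ?_, by omega, hU, hE', hdepeq, ?_, ?_⟩
    · intro C hC
      rcases Finset.mem_insert.mp hC with rfl | hC
      · exact hvars
      · exact hΓv _ hC
    · exact DQRATDeriv.ata (Ec ∪ Fc) hder (upbot_res (hsub hmE) (hsub hmF) hFc)
    · exact Finset.insert_subset_insert _ hsub
    · intro C hC
      rcases Finset.mem_insert.mp hC with rfl | hC
      · exact hvars
      · exact hmv _ hC
  | @red ψ Γ n C w hd hmem hwU hwC hwnC hred ih =>
    obtain ⟨hdisj, hdep, hΓv, ψ', m, hder, hm, hU, hE', hdepeq, hsub, hmv⟩ := ih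
    have hCv : ∀ l ∈ C, l.var ∈ ψ.U ∪ ψ.E := fun l hl =>
      hΓv _ hmem _ (Finset.mem_insert_of_mem hl)
    have hDC : w.var ∉ depClause ψ' C := by
      rw [depClause, Finset.mem_biUnion]
      rintro ⟨l, hl, hwl⟩
      rw [DQBF.depOf] at hwl
      rcases Finset.mem_union.mp (hCv l hl) with hlU | hlE
      · rw [if_pos (hU ▸ hlU)] at hwl
        rw [Finset.mem_singleton] at hwl
        rcases lit_eq_of_var hwl.symm with rfl | rfl
        · exact hwC hl
        · exact hwnC (by simpa using hl)
      · have hlnU : l.var ∉ ψ'.U := by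
          rw [hU]; exact fun hc => (Finset.disjoint_left.mp hdisj hc) hlE
        rw [if_neg hlnU, hdepeq _ hlE] at hwl
        exact hred l hl hlE hwl
    have h1 := DQRATDeriv.ur C w hder (hsub hmem) hwC (hU ▸ hwU) hDC
    have h2 := DQRATDeriv.ata (insert w C) h1
      (upbot_weaken (Or.inl (Finset.mem_coe.mpr (Finset.mem_insert_self _ _)))
        (fun l hl => Or.inr (mem_negUnits (Finset.mem_insert_of_mem hl))))
    refine ⟨hdisj, hdep, ?_, _, m + 2, h2, by omega, hU, hE', hdepeq, ?_, ?_⟩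
    · intro D hD
      rcases Finset.mem_insert.mp hD with rfl | hD
      · exact hCv
      · exact hΓv _ hD
    · intro D hD
      rcases Finset.mem_insert.mp hD with rfl | hDΓ
      · exact Finset.mem_insert_of_mem (Finset.mem_insert_self _ _)
      · by_cases hDe : D = insert w C
        · exact hDe ▸ Finset.mem_insert_self _ _
        · exact Finset.mem_insert_of_mem (Finset.mem_insert_of_mem
            (Finset.mem_erase.mpr ⟨hDe, hsub hDΓ⟩))
    · intro D hD
      rcases Finset.mem_insert.mp hD with rfl | hD
      · exact hΓv _ hmem
      · rcases Finset.mem_insert.mp hD with rfl | hD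
        · exact hCv
        · exact hmv _ (Finset.mem_of_mem_erase hD)
  | @ext ψ Γ n α y1 y2 v hd hα hv hy1 hy2 ih =>
    obtain ⟨hdisj, hdep, hΓv, ψ', m, hder, hm, hU, hE', hdepeq, hsub, hmv⟩ := ih
    have hvU : v ∉ ψ.U := fun hc => hv (Finset.mem_union_left _ hc)
    have hvE : v ∉ ψ.E := fun hc => hv (Finset.mem_union_right _ hc)
    have hy1v : y1 ≠ v := fun hc => hv (hc ▸ hy1)
    have hy2v : y2 ≠ v := fun hc => hv (hc ▸ hy2)
    have hAvar : ∀ l ∈ negAssign α, l.var ∈ ψ.U := by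
      intro l hl
      obtain ⟨a, ha, rfl⟩ := Finset.mem_image.mp hl
      exact hα a ha
    have hAmem : ∀ a ∈ α, a.negate ∈ negAssign α := fun a ha =>
      Finset.mem_image_of_mem _ ha
    have hvnA : ∀ p : Bool, (⟨v, p⟩ : Lit V) ∉ negAssign α := fun p hc =>
      hvU (hAvar _ hc)
    set T1' : Clause V := negAssign α ∪ ({⟨v, true⟩, ⟨y1, true⟩} : Clause V) with hT1d
    set T2' : Clause V := negAssign α ∪ ({⟨v, true⟩, ⟨y2, true⟩} : Clause V) with hT2d
    set T3' : Clause V :=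
      negAssign α ∪ ({⟨v, false⟩, ⟨y1, false⟩, ⟨y2, false⟩} : Clause V) with hT3d
    have hvT1 : (⟨v, true⟩ : Lit V) ∈ T1' :=
      Finset.mem_union_right _ (Finset.mem_insert_self _ _)
    have hvT2 : (⟨v, true⟩ : Lit V) ∈ T2' :=
      Finset.mem_union_right _ (Finset.mem_insert_self _ _)
    have hvT3 : (⟨v, false⟩ : Lit V) ∈ T3' :=
      Finset.mem_union_right _ (Finset.mem_insert_self _ _)
    have hT1var : ∀ l ∈ T1', l.var = v → l = ⟨v, true⟩ := by
      intro l hl hlv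
      rcases Finset.mem_union.mp hl with h | h
      · have := hAvar l h; rw [hlv] at this; exact absurd this hvU
      · rcases Finset.mem_insert.mp h with rfl | h
        · rfl
        · rw [Finset.mem_singleton] at h; subst h; exact absurd hlv hy1v
    have hT2var : ∀ l ∈ T2', l.var = v → l = ⟨v, true⟩ := by
      intro l hl hlv
      rcases Finset.mem_union.mp hl with h | h
      · have := hAvar l h; rw [hlv] at this; exact absurd this hvU
      · rcases Finset.mem_insert.mp h with rfl | h
        · rfl
        · rw [Finset.mem_singleton] at h; subst h; exact absurd hlv hy2v
    have hMv : ∀ C ∈ ψ'.matrix, ∀ l ∈ C, l.var ≠ v := by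
      intro C hC l hl hlv
      exact hv (hlv ▸ hmv C hC l hl)
    have hlift : ∀ w, w ∈ ψ.U ∪ ψ.E → w ∈ ψ.U ∪ insert v ψ.E := by
      intro w hw
      rcases Finset.mem_union.mp hw with h | h
      · exact Finset.mem_union_left _ h
      · exact Finset.mem_union_right _ (Finset.mem_insert_of_mem h)
    have hT1vars : ∀ l ∈ T1', l.var ∈ ψ.U ∪ insert v ψ.E := by
      intro l hl
      rcases Finset.mem_union.mp hl with h | h
      · exact Finset.mem_union_left _ (hAvar l h)
      · rcases Finset.mem_insert.mp h with rfl | h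
        · exact Finset.mem_union_right _ (Finset.mem_insert_self _ _)
        · rw [Finset.mem_singleton] at h; subst h; exact hlift _ hy1
    have hT2vars : ∀ l ∈ T2', l.var ∈ ψ.U ∪ insert v ψ.E := by
      intro l hl
      rcases Finset.mem_union.mp hl with h | h
      · exact Finset.mem_union_left _ (hAvar l h)
      · rcases Finset.mem_insert.mp h with rfl | h
        · exact Finset.mem_union_right _ (Finset.mem_insert_self _ _)
        · rw [Finset.mem_singleton] at h; subst h; exact hlift _ hy2
    have hT3vars : ∀ l ∈ T3', l.var ∈ ψ.U ∪ insert v ψ.E := by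
      intro l hl
      rcases Finset.mem_union.mp hl with h | h
      · exact Finset.mem_union_left _ (hAvar l h)
      · rcases Finset.mem_insert.mp h with rfl | h
        · exact Finset.mem_union_right _ (Finset.mem_insert_self _ _)
        · rcases Finset.mem_insert.mp h with rfl | h
          · exact hlift _ hy1
          · rw [Finset.mem_singleton] at h; subst h; exact hlift _ hy2
    have hdoU : ∀ w, w ∈ ψ.U ∪ ψ.E → ψ.depOf w ⊆ ψ.U := by
      intro w hw
      rw [DQBF.depOf]
      split
      · next h => exact Finset.singleton_subset_iff.mpr h
      · next h =>
        rcases Finset.mem_union.mp hw with h' | h'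
        · exact absurd h' h
        · exact hdep _ h'
    set Dfl : Finset V := ψ.depOf y1 ∪ ψ.depOf y2 with hDfld
    set Dsm : Finset V := (ψ.depOf y1 ∪ ψ.depOf y2) \ α.image Lit.var with hDsmd
    have hDflU : Dfl ⊆ ψ.U := Finset.union_subset (hdoU _ hy1) (hdoU _ hy2)
    have hDsmU : Dsm ⊆ ψ.U := Finset.sdiff_subset.trans hDflU
    have hdisjN : Disjoint ψ.U (insert v ψ.E) := by
      rw [Finset.disjoint_insert_right]; exact ⟨hvU, hdisj⟩
    have hdepN : ∀ x ∈ insert v ψ.E, Function.update ψ.dep v Dsm x ⊆ ψ.U := by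
      intro x hx
      by_cases hxv : x = v
      · subst hxv; rw [Function.update_self]; exact hDsmU
      · have hxE : x ∈ ψ.E := by
          rcases Finset.mem_insert.mp hx with hc | hc
          · exact absurd hc hxv
          · exact hc
        rw [Function.update_of_ne hxv]; exact hdep _ hxE
    have hΓN : ∀ C ∈ insert T1' (insert T2' (insert T3' Γ)),
        ∀ l ∈ C, l.var ∈ ψ.U ∪ insert v ψ.E := by
      intro C hC
      rcases Finset.mem_insert.mp hC with rfl | hC
      · exact hT1vars
      rcases Finset.mem_insert.mp hC with rfl | hC
      · exact hT2vars
      rcases Finset.mem_insert.mp hC with rfl | hC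
      · exact hT3vars
      intro l hl; exact hlift _ (hΓv C hC l hl)
    have hbpm : ∀ D0 : Finset V, D0 ⊆ ψ.U →
        DQRATDeriv ψ0
          ⟨ψ.U, insert v ψ.E, Function.update ψ'.dep v D0, ψ'.matrix⟩ (m + 1) := by
      intro D0 hD0
      refine DQRATDeriv.bpm _ hder hU.le (hE'.le.trans (Finset.subset_insert _ _))
        hdisjN ?_ ?_ rfl
      · intro x hx
        exact Function.update_of_ne (fun hc => hvE (by rw [← hc]; exact hE' ▸ hx)) _ _
      · intro x hx
        show Function.update ψ'.dep v D0 x ⊆ ψ.U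
        by_cases hxv : x = v
        · subst hxv; rw [Function.update_self]; exact hD0
        · have hxE : x ∈ ψ.E := by
            rcases Finset.mem_insert.mp hx with hc | hc
            · exact absurd hc hxv
            · exact hc
          rw [Function.update_of_ne hxv, hdepeq _ hxE]; exact hdep _ hxE
    by_cases hcon : ∃ b ∈ α, b.negate ∈ α
    · -- the assignment is contradictory: all three clauses are tautologies
      obtain ⟨b0, hb0, hb0n⟩ := hcon
      have h1 := hbpm Dsm hDsmU
      have htauts : ∀ C ∈ [T1', T2', T3'],
          (∃ l ∈ C, l.var ∈ insert v ψ.E) ∧ ∃ b ∈ C, b.negate ∈ C := by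
        intro C hC
        have hsubA : negAssign α ⊆ C := by
          rcases List.mem_cons.mp hC with rfl | hC
          · exact Finset.subset_union_left
          rcases List.mem_cons.mp hC with rfl | hC
          · exact Finset.subset_union_left
          rcases List.mem_cons.mp hC with rfl | hC
          · exact Finset.subset_union_left
          · simp at hC
        have hvlit : ∃ l ∈ C, l.var ∈ insert v ψ.E := by
          rcases List.mem_cons.mp hC with rfl | hC
          · exact ⟨_, hvT1, Finset.mem_insert_self _ _⟩
          rcases List.mem_cons.mp hC with rfl | hC
          · exact ⟨_, hvT2, Finset.mem_insert_self _ _⟩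
          rcases List.mem_cons.mp hC with rfl | hC
          · exact ⟨_, hvT3, Finset.mem_insert_self _ _⟩
          · simp at hC
        exact ⟨hvlit, b0.negate, hsubA (hAmem _ hb0), hsubA (hAmem _ hb0n)⟩
      have h2 := deriv_add_taut_list [T1', T2', T3'] h1 htauts
      refine ⟨hdisjN, hdepN, hΓN, _, m + 1 + 3, h2, by omega, rfl, rfl, ?_, ?_, ?_⟩
      · intro x hx
        show Function.update ψ'.dep v Dsm x = Function.update ψ.dep v Dsm x
        by_cases hxv : x = v
        · subst hxv; rw [Function.update_self, Function.update_self]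
        · have hxE : x ∈ ψ.E := by
            rcases Finset.mem_insert.mp hx with hc | hc
            · exact absurd hc hxv
            · exact hc
          rw [Function.update_of_ne hxv, Function.update_of_ne hxv]
          exact hdepeq _ hxE
      · intro C hC
        rcases Finset.mem_insert.mp hC with rfl | hC
        · exact Finset.mem_union_right _ (List.mem_toFinset.mpr (by simp))
        rcases Finset.mem_insert.mp hC with rfl | hC
        · exact Finset.mem_union_right _ (List.mem_toFinset.mpr (by simp))
        rcases Finset.mem_insert.mp hC with rfl | hC
        · exact Finset.mem_union_right _ (List.mem_toFinset.mpr (by simp))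
        · exact Finset.mem_union_left _ (hsub hC)
      · intro C hC
        rcases Finset.mem_union.mp hC with hC | hC
        · intro l hl; exact hlift _ (hmv C hC l hl)
        · rw [List.mem_toFinset] at hC
          rcases List.mem_cons.mp hC with rfl | hC
          · exact hT1vars
          rcases List.mem_cons.mp hC with rfl | hC
          · exact hT2vars
          rcases List.mem_cons.mp hC with rfl | hC
          · exact hT3vars
          · simp at hC
    · -- non-contradictory assignment
      have h1 := hbpm Dfl hDflU
      set dfl' : V → Finset V := Function.update ψ'.dep v Dfl with hdfl'
      -- add T3'
      have hC3eq :
          insert (⟨v, false⟩ : Lit V)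
            (negAssign α ∪ ({⟨y1, false⟩, ⟨y2, false⟩} : Clause V)) = T3' :=
        (Finset.union_insert _ _ _).symm
      have h2 : DQRATDeriv ψ0
          ⟨ψ.U, insert v ψ.E, dfl', insert T3' ψ'.matrix⟩ (m + 1 + 1) := by
        have hstep := DQRATDeriv.ratE (ψ0 := ψ0)
          (negAssign α ∪ ({⟨y1, false⟩, ⟨y2, false⟩} : Clause V)) (⟨v, false⟩ : Lit V)
          h1 (Finset.mem_insert_self _ _) ?_ ?_
        · rwa [hC3eq] at hstep
        · intro hc
          rcases Finset.mem_union.mp hc with h | h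
          · exact hvnA false h
          · rcases Finset.mem_insert.mp h with h | h
            · simp only [Lit.mk.injEq] at h; exact hy1v h.1.symm
            · rw [Finset.mem_singleton] at h
              simp only [Lit.mk.injEq] at h; exact hy2v h.1.symm
        · intro D hD hvD
          exact absurd rfl (hMv D hD _ hvD)
      -- helper for the side conditions of the remaining two additions
      have houter : ∀ y, y ∈ ψ.U ∪ ψ.E → ψ.depOf y ⊆ Dfl → ∀ M : Finset (Clause V),
          outerLe ⟨ψ.U, insert v ψ.E, dfl', M⟩ y v := by
        intro y hy hyD M
        refine outerLe_intro (ψc := ⟨ψ.U, insert v ψ.E, dfl', M⟩) hvU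
          (hlift _ hy) ?_
        show DQBF.depOf _ y ⊆ dfl' v
        rw [hdfl', Function.update_self, DQBF.depOf]
        split
        · next hyU =>
          have := hyD; rwa [DQBF.depOf, if_pos hyU] at this
        · next hyU =>
          have hyE : y ∈ ψ.E := by
            rcases Finset.mem_union.mp hy with h | h
            · exact absurd h hyU
            · exact h
          have hyv : y ≠ v := fun hc => hvE (by rw [← hc]; exact hyE)
          show Function.update ψ'.dep v Dfl y ⊆ Dfl
          rw [Function.update_of_ne hyv, hdepeq _ hyE]
          have := hyD; rwa [DQBF.depOf, if_neg hyU] at this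
      have hcheck : ∀ (yi : V), yi ≠ v →
          (⟨yi, false⟩ : Lit V) ∈ T3' →
          outerLe ⟨ψ.U, insert v ψ.E, dfl',
            insert T3' ψ'.matrix⟩ yi v →
          ∀ Cadd : Clause V, (⟨yi, true⟩ : Lit V) ∈ Cadd →
          UPBot ((↑(insert T3' ψ'.matrix) : Set (Clause V)) ∪ negUnits Cadd ∪
            ratUnits ⟨ψ.U, insert v ψ.E, dfl', insert T3' ψ'.matrix⟩ T3'
              (⟨v, true⟩ : Lit V)) := by
        intro yi hyiv hyiT3 hout Cadd hmemC
        refine upbot_contra (b := (⟨yi, true⟩ : Lit V)) ?_ ?_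
        · refine Or.inr ⟨(⟨yi, false⟩ : Lit V), hyiT3, ?_, hout, rfl⟩
          intro hc
          have := congrArg Lit.var hc
          exact hyiv this
        · exact Or.inl (Or.inr (mem_negUnits hmemC))
      have hout1 := houter y1 hy1 Finset.subset_union_left (insert T3' ψ'.matrix)
      have hout2 := houter y2 hy2 Finset.subset_union_right (insert T3' ψ'.matrix)
      have hy1T3 : (⟨y1, false⟩ : Lit V) ∈ T3' :=
        Finset.mem_union_right _ (Finset.mem_insert_of_mem (Finset.mem_insert_self _ _))
      have hy2T3 : (⟨y2, false⟩ : Lit V) ∈ T3' :=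
        Finset.mem_union_right _ (Finset.mem_insert_of_mem
          (Finset.mem_insert_of_mem (Finset.mem_singleton_self _)))
      -- add T1'
      have hC1eq : insert (⟨v, true⟩ : Lit V)
          (negAssign α ∪ ({⟨y1, true⟩} : Clause V)) = T1' :=
        (Finset.union_insert _ _ _).symm
      have h3 : DQRATDeriv ψ0
          ⟨ψ.U, insert v ψ.E, dfl', insert T1' (insert T3' ψ'.matrix)⟩
          (m + 1 + 1 + 1) := by
        have hstep := DQRATDeriv.ratE (ψ0 := ψ0)
          (negAssign α ∪ ({⟨y1, true⟩} : Clause V)) (⟨v, true⟩ : Lit V)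
          h2 (Finset.mem_insert_self _ _) ?_ ?_
        · rwa [hC1eq] at hstep
        · intro hc
          rcases Finset.mem_union.mp hc with h | h
          · exact hvnA true h
          · rw [Finset.mem_singleton] at h
            simp only [Lit.mk.injEq] at h; exact hy1v h.1.symm
        · intro D hD hvD
          rcases Finset.mem_insert.mp hD with rfl | hD
          · exact hcheck y1 hy1v hy1T3 hout1 _
              (Finset.mem_insert_of_mem
                (Finset.mem_union_right _ (Finset.mem_singleton_self _)))
          · exact absurd rfl (hMv D hD _ hvD)
      -- add T2'
      have hC2eq : insert (⟨v, true⟩ : Lit V)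
          (negAssign α ∪ ({⟨y2, true⟩} : Clause V)) = T2' :=
        (Finset.union_insert _ _ _).symm
      have hT3ne : ∀ D ∈ insert T1' (insert T3' ψ'.matrix),
          (⟨v, true⟩ : Lit V).negate ∈ D → D = T3' := by
        intro D hD hvD
        rcases Finset.mem_insert.mp hD with rfl | hD
        · exfalso
          have := hT1var _ hvD rfl
          simp [Lit.negate] at this
        rcases Finset.mem_insert.mp hD with rfl | hD
        · rfl
        · exact absurd rfl (hMv D hD _ hvD)
      have h4 : DQRATDeriv ψ0
          ⟨ψ.U, insert v ψ.E, dfl',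
            insert T2' (insert T1' (insert T3' ψ'.matrix))⟩
          (m + 1 + 1 + 1 + 1) := by
        have hstep := DQRATDeriv.ratE (ψ0 := ψ0)
          (negAssign α ∪ ({⟨y2, true⟩} : Clause V)) (⟨v, true⟩ : Lit V)
          h3 (Finset.mem_insert_self _ _) ?_ ?_
        · rwa [hC2eq] at hstep
        · intro hc
          rcases Finset.mem_union.mp hc with h | h
          · exact hvnA true h
          · rw [Finset.mem_singleton] at h
            simp only [Lit.mk.injEq] at h; exact hy2v h.1.symm
        · intro D hD hvD
          have hDeq := hT3ne D hD hvD
          subst hDeq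
          refine upbot_contra (b := (⟨y2, true⟩ : Lit V)) ?_ ?_
          · refine Or.inr ⟨(⟨y2, false⟩ : Lit V), hy2T3, ?_, ?_, rfl⟩
            · intro hc
              have := congrArg Lit.var hc
              exact hy2v this
            · exact hout2
          · refine Or.inl (Or.inr (mem_negUnits ?_))
            exact Finset.mem_insert_of_mem
              (Finset.mem_union_right _ (Finset.mem_singleton_self _))
      set M3 : Finset (Clause V) :=
        insert T2' (insert T1' (insert T3' ψ'.matrix)) with hM3d
      have h3M : ({T1', T2', T3'} : Finset (Clause V)) ⊆ M3 := by
        intro C hC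
        simp only [Finset.mem_insert, Finset.mem_singleton] at hC
        rcases hC with rfl | rfl | rfl
        · exact Finset.mem_insert_of_mem (Finset.mem_insert_self _ _)
        · exact Finset.mem_insert_self _ _
        · exact Finset.mem_insert_of_mem
            (Finset.mem_insert_of_mem (Finset.mem_insert_self _ _))
      set Lf : Finset (Clause V) :=
        ({T1', T2', T3'} : Finset (Clause V)).filter (fun C => ∃ a ∈ α, a ∈ C)
        with hLfd
      set L : List (Clause V) := Lf.toList with hLd
      have hLnd : L.Nodup := Finset.nodup_toList _
      have hLfin : L.toFinset = Lf := Finset.toList_toFinset _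
      have hLlen : L.length ≤ 3 := by
        rw [hLd, Finset.length_toList]
        refine le_trans (Finset.card_le_card (Finset.filter_subset _ _)) ?_
        refine le_trans (Finset.card_insert_le _ _) ?_
        refine Nat.succ_le_succ ?_
        refine le_trans (Finset.card_insert_le _ _) ?_
        simp
      have h5 := deriv_del_list L h4 hLnd (by
        intro C hC
        rw [hLd, Finset.mem_toList] at hC
        exact h3M (Finset.filter_subset _ _ hC))
      -- the D^pu step
      have h6 : DQRATDeriv ψ0
          ⟨ψ.U, insert v ψ.E, Function.update dfl' v Dsm, M3 \ L.toFinset⟩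
          (m + 1 + 1 + 1 + 1 + L.length + 1) := by
        refine DQRATDeriv.dpuStep _ h5 rfl rfl rfl ?_
        intro u x hx hnx
        have hnx' : u ∉ Function.update dfl' v Dsm x := hnx
        clear hnx
        by_cases hxv : x = v
        · subst hxv
          rw [Function.update_self] at hnx'
          by_cases huα : u ∈ α.image Lit.var
          · right
            obtain ⟨a, haα, hav⟩ := Finset.mem_image.mp huα
            refine not_dpu hav ?_
            intro C hC hCv
            obtain ⟨hC3, hCL⟩ := Finset.mem_sdiff.mp hC
            have hC3' : C = T2' ∨ C = T1' ∨ C = T3' ∨ C ∈ ψ'.matrix := by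
              rcases Finset.mem_insert.mp hC3 with h | h
              · exact Or.inl h
              rcases Finset.mem_insert.mp h with h | h
              · exact Or.inr (Or.inl h)
              rcases Finset.mem_insert.mp h with h | h
              · exact Or.inr (Or.inr (Or.inl h))
              · exact Or.inr (Or.inr (Or.inr h))
            have hnotbad : ∀ hC0 : C ∈ ({T1', T2', T3'} : Finset (Clause V)),
                a ∉ C := by
              intro hC0 haC
              apply hCL
              rw [hLfin, hLfd]
              exact Finset.mem_filter.mpr ⟨hC0, a, haα, haC⟩
            rcases hC3' with rfl | rfl | rfl | hC'
            · exact ⟨hnotbad (by simp), Finset.mem_union_left _ (hAmem a haα)⟩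
            · exact ⟨hnotbad (by simp), Finset.mem_union_left _ (hAmem a haα)⟩
            · exact ⟨hnotbad (by simp), Finset.mem_union_left _ (hAmem a haα)⟩
            · exfalso
              obtain ⟨l, hl, hlv⟩ := hCv
              exact hMv _ hC' _ hl hlv
          · left
            show u ∉ dfl' x
            rw [hdfl', Function.update_self]
            intro huD
            exact hnx' (Finset.mem_sdiff.mpr ⟨huD, huα⟩)
        · left
          rw [Function.update_of_ne hxv] at hnx'
          exact hnx'
      -- re-add the deleted (tautological) clauses
      have h7 := deriv_add_taut_list L h6 (by
        intro C hC
        rw [hLd, Finset.mem_toList, hLfd] at hC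
        obtain ⟨hC3, a, haα, haC⟩ := Finset.mem_filter.mp hC
        constructor
        · simp only [Finset.mem_insert, Finset.mem_singleton] at hC3
          rcases hC3 with rfl | rfl | rfl
          · exact ⟨_, hvT1, Finset.mem_insert_self _ _⟩
          · exact ⟨_, hvT2, Finset.mem_insert_self _ _⟩
          · exact ⟨_, hvT3, Finset.mem_insert_self _ _⟩
        · refine ⟨a, haC, ?_⟩
          simp only [Finset.mem_insert, Finset.mem_singleton] at hC3
          rcases hC3 with rfl | rfl | rfl
          · exact Finset.subset_union_left (hAmem a haα)
          · exact Finset.subset_union_left (hAmem a haα)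
          · exact Finset.subset_union_left (hAmem a haα))
      have hMsup : M3 ⊆ (M3 \ L.toFinset) ∪ L.toFinset := by
        intro C hC
        by_cases hCL : C ∈ L.toFinset
        · exact Finset.mem_union_right _ hCL
        · exact Finset.mem_union_left _ (Finset.mem_sdiff.mpr ⟨hC, hCL⟩)
      refine ⟨hdisjN, hdepN, hΓN, _,
        m + 1 + 1 + 1 + 1 + L.length + 1 + L.length, h7, by omega, rfl, rfl,
        ?_, ?_, ?_⟩
      · intro x hx
        show Function.update dfl' v Dsm x = Function.update ψ.dep v Dsm x
        by_cases hxv : x = v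
        · subst hxv; rw [Function.update_self, Function.update_self]
        · have hxE : x ∈ ψ.E := by
            rcases Finset.mem_insert.mp hx with hc | hc
            · exact absurd hc hxv
            · exact hc
          rw [Function.update_of_ne hxv, Function.update_of_ne hxv, hdfl',
            Function.update_of_ne hxv]
          exact hdepeq _ hxE
      · intro C hC
        rcases Finset.mem_insert.mp hC with rfl | hC
        · exact hMsup (h3M (by simp))
        rcases Finset.mem_insert.mp hC with rfl | hC
        · exact hMsup (h3M (by simp))
        rcases Finset.mem_insert.mp hC with rfl | hC
        · exact hMsup (h3M (by simp))
        · exact hMsup (Finset.mem_insert_of_mem (Finset.mem_insert_of_mem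
            (Finset.mem_insert_of_mem (hsub hC))))
      · intro C hC
        have hCM3 : C ∈ M3 := by
          rcases Finset.mem_union.mp hC with h | h
          · exact (Finset.mem_sdiff.mp h).1
          · rw [hLfin] at h
            exact h3M (Finset.filter_subset _ _ h)
        rw [hM3d] at hCM3
        rcases Finset.mem_insert.mp hCM3 with rfl | hCM3
        · exact hT2vars
        rcases Finset.mem_insert.mp hCM3 with rfl | hCM3
        · exact hT1vars
        rcases Finset.mem_insert.mp hCM3 with rfl | hCM3
        · exact hT3vars
        · intro l hl; exact hlift _ (hmv C hCM3 l hl)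
  | @weakU ψ Γ n v hd hv ih =>
    obtain ⟨hdisj, hdep, hΓv, ψ', m, hder, hm, hU, hE', hdepeq, hsub, hmv⟩ := ih
    have hvU : v ∉ ψ.U := fun hc => hv (Finset.mem_union_left _ hc)
    have hvE : v ∉ ψ.E := fun hc => hv (Finset.mem_union_right _ hc)
    have h1 := DQRATDeriv.bpm (ψ0 := ψ0)
      ⟨insert v ψ.U, ψ'.E, ψ'.dep, ψ'.matrix⟩ hder
      (by rw [hU]; exact Finset.subset_insert _ _) (Finset.Subset.refl _)
      (by
        show Disjoint (insert v ψ.U) ψ'.E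
        rw [hE', Finset.disjoint_insert_left]
        exact ⟨hvE, hdisj⟩)
      (fun x _ => rfl)
      (by
        intro x hx
        show ψ'.dep x ⊆ insert v ψ.U
        rw [hdepeq _ (hE' ▸ hx)]
        exact (hdep _ (hE' ▸ hx)).trans (Finset.subset_insert _ _))
      rfl
    refine ⟨?_, ?_, ?_, _, m + 1, h1, by omega, rfl, hE', hdepeq, hsub, ?_⟩
    · show Disjoint (insert v ψ.U) ψ.E
      rw [Finset.disjoint_insert_left]; exact ⟨hvE, hdisj⟩
    · exact fun x hx => (hdep x hx).trans (Finset.subset_insert _ _)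
    · intro D hD l hl
      have := hΓv D hD l hl
      simp only [Finset.mem_union, Finset.mem_insert] at this ⊢
      tauto
    · intro D hD l hl
      have := hmv D hD l hl
      simp only [Finset.mem_union, Finset.mem_insert] at this ⊢
      tauto
  | @weakE ψ Γ n v Dv hd hv hDv ih =>
    obtain ⟨hdisj, hdep, hΓv, ψ', m, hder, hm, hU, hE', hdepeq, hsub, hmv⟩ := ih
    have hvU : v ∉ ψ.U := fun hc => hv (Finset.mem_union_left _ hc)
    have hvE : v ∉ ψ.E := fun hc => hv (Finset.mem_union_right _ hc)
    have h1 := DQRATDeriv.bpm (ψ0 := ψ0)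
      ⟨ψ'.U, insert v ψ.E, Function.update ψ'.dep v Dv, ψ'.matrix⟩ hder
      (Finset.Subset.refl _)
      (by rw [hE']; exact Finset.subset_insert _ _)
      (by
        show Disjoint ψ'.U (insert v ψ.E)
        rw [hU, Finset.disjoint_insert_right]
        exact ⟨hvU, hdisj⟩)
      (by
        intro x hx
        have hxv : x ≠ v := fun hc => hvE (by rw [← hc]; exact hE' ▸ hx)
        exact Function.update_of_ne hxv _ _)
      (by
        intro x hx
        show Function.update ψ'.dep v Dv x ⊆ ψ'.U
        by_cases hxv : x = v
        · subst hxv; rw [Function.update_self, hU]; exact hDv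
        · have hxE : x ∈ ψ.E := by
            rcases Finset.mem_insert.mp hx with hc | hc
            · exact absurd hc hxv
            · exact hc
          rw [Function.update_of_ne hxv, hdepeq _ hxE, hU]
          exact hdep _ hxE)
      rfl
    refine ⟨?_, ?_, ?_, _, m + 1, h1, by omega, hU, rfl, ?_, hsub, ?_⟩
    · show Disjoint ψ.U (insert v ψ.E)
      rw [Finset.disjoint_insert_right]; exact ⟨hvU, hdisj⟩
    · intro x hx
      show Function.update ψ.dep v Dv x ⊆ ψ.U
      by_cases hxv : x = v
      · subst hxv; rw [Function.update_self]; exact hDv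
      · have hxE : x ∈ ψ.E := by
          rcases Finset.mem_insert.mp hx with hc | hc
          · exact absurd hc hxv
          · exact hc
        rw [Function.update_of_ne hxv]
        exact hdep _ hxE
    · intro D hD l hl
      have := hΓv D hD l hl
      simp only [Finset.mem_union, Finset.mem_insert] at this ⊢
      tauto
    · intro x hx
      show Function.update ψ'.dep v Dv x = Function.update ψ.dep v Dv x
      by_cases hxv : x = v
      · subst hxv; rw [Function.update_self, Function.update_self]
      · have hxE : x ∈ ψ.E := by
          rcases Finset.mem_insert.mp hx with hc | hc
          · exact absurd hc hxv
          · exact hc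
        rw [Function.update_of_ne hxv, Function.update_of_ne hxv]
        exact hdepeq _ hxE
    · intro D hD l hl
      have := hmv D hD l hl
      simp only [Finset.mem_union, Finset.mem_insert] at this ⊢
      tauto

end Simulation

/-- DQRAT(D^pu) p-simulates IndExt-QU-Res. There is a polynomial
`p` such that every IndExt-QU-Res refutation of a DQBF `ψ0` of size `n` yields a
DQRAT(D^pu) refutation of `ψ0` of size at most `p(n + |ψ0|)`. -/
theorem dqrat_dpu_simulates_indext : ∃ p : Polynomial ℕ,
    ∀ (ψ0 : DQBF ℕ), ψ0.WF →
      ∀ (ψ : DQBF ℕ) (Γ : Finset (Clause ℕ)) (n : ℕ),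
        IndExtDeriv ψ0 ψ Γ n → (∅ : Clause ℕ) ∈ Γ →
        ∃ m : ℕ, DQRATRefutable ψ0 m ∧ m ≤ p.eval (n + ψ0.size) := by
  refine ⟨Polynomial.C 11 * Polynomial.X, ?_⟩
  intro ψ0 hWF ψ Γ n h hemp
  obtain ⟨-, -, -, ψ', m, hder, hm, -, -, -, hsub, -⟩ := sim_main hWF h
  refine ⟨m, ⟨ψ', hder, hsub hemp⟩, ?_⟩
  simp only [Polynomial.eval_mul, Polynomial.eval_C, Polynomial.eval_X]
  omega
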